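/- arXiv:1907.12805 — 2 statements merged into one kernel-verified Lean document; each statement's English description precedes it below -/
import Mathlib

section
/- For 0 < σ < 1, 1 < θ < ∞, and 0 < ρ < ∞, the a.e.-defined derivative w'_{σ,θ} belongs to L_ρ(ℝ) if and only if (1−σ)/(1−1/θ) < 1/ρ. -/
open MeasureTheory Real Set

noncomputable def zetaR (θ : ℝ) : ℝ := ∑' n : ℕ, ((n : ℝ) + 1) ^ (-θ)

noncomputable def aSeq (θ : ℝ) (n : ℕ) : ℝ :=
  4 * ∑ j ∈ Finset.Icc 1 (n - 1), (j : ℝ) ^ (-θ)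

noncomputable def wPiece (σ θ : ℝ) (n : ℕ) (ξ : ℝ) : ℝ :=
  if ξ < aSeq θ n + (n : ℝ) ^ (-θ) then (ξ - aSeq θ n) ^ σ
  else if ξ < aSeq θ n + 2 * (n : ℝ) ^ (-θ) then (n : ℝ) ^ (-(θ * σ))
  else if ξ < aSeq θ n + 3 * (n : ℝ) ^ (-θ) then (aSeq θ n + 3 * (n : ℝ) ^ (-θ) - ξ) ^ σ
  else 0

open Classical in
noncomputable def wFn (σ θ : ℝ) (ξ : ℝ) : ℝ :=
  if h : ∃ n : ℕ, 2 ≤ n ∧ aSeq θ n ≤ ξ ∧ ξ < aSeq θ (n + 1) then wPiece σ θ h.choose ξ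
  else 0

open scoped Topology ENNReal

/-!
Off the countably many break points `aSeq θ n` and their limit `4 * zetaR θ`, the derivative of
`wFn σ θ` vanishes except on the rising and falling edges of the bumps. On the `n`-th bump, of
width `h = n ^ (-θ)`, each edge contributes `σ ^ ρ * ∫ t in (0, h), t ^ ((σ - 1) * ρ)` to
`∫ |w'| ^ ρ` (after a translation, resp. a reflection). This integral is infinite unless
`s := (σ - 1) * ρ > -1`, and then it is `h ^ (s + 1) / (s + 1) = n ^ (-θ * (s + 1)) / (s + 1)`,
so the series over `n` converges iff `θ * (s + 1) > 1`, which is the stated condition rearranged.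
-/

lemma setLIntegral_Ioc_eq_add (f : ℝ → ℝ≥0∞) {a b c : ℝ} (hab : a ≤ b) (hbc : b ≤ c) :
    ∫⁻ x in Ioc a c, f x = (∫⁻ x in Ioc a b, f x) + ∫⁻ x in Ioc b c, f x := by
  rw [← Ioc_union_Ioc_eq_Ioc hab hbc,
    lintegral_union measurableSet_Ioc (Ioc_disjoint_Ioc_of_le le_rfl)]

lemma setLIntegral_Ioo_comp_sub_right (f : ℝ → ℝ≥0∞) (a h : ℝ) :
    ∫⁻ x in Ioo a (a + h), f (x - a) = ∫⁻ t in Ioo 0 h, f t := by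
  have := (measurePreserving_sub_right volume a).setLIntegral_comp_preimage_emb
    (Homeomorph.subRight a).measurableEmbedding f (Ioo 0 h)
  rwa [preimage_sub_const_Ioo, zero_add, add_comm] at this

lemma setLIntegral_Ioo_comp_const_sub (f : ℝ → ℝ≥0∞) (c h : ℝ) :
    ∫⁻ x in Ioo (c - h) c, f (c - x) = ∫⁻ t in Ioo 0 h, f t := by
  have := (Measure.measurePreserving_sub_left volume c).setLIntegral_comp_preimage_emb
    (Homeomorph.subLeft c).measurableEmbedding f (Ioo 0 h)
  rwa [preimage_const_sub_Ioo, sub_zero] at this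

lemma setLIntegral_Ioo_rpow {h s : ℝ} (hh : 0 < h) (hs : -1 < s) :
    ∫⁻ t in Ioo 0 h, ENNReal.ofReal (t ^ s) = ENNReal.ofReal (h ^ (s + 1) / (s + 1)) := by
  have hnonneg : 0 ≤ᵐ[volume.restrict (Ioo 0 h)] fun t : ℝ => t ^ s :=
    (ae_restrict_iff' measurableSet_Ioo).2 (.of_forall fun t ht => rpow_nonneg ht.1.le s)
  rw [← ofReal_integral_eq_lintegral_ofReal
      ((intervalIntegral.integrableOn_Ioo_rpow_iff hh).2 hs) hnonneg,
    ← integral_Ioc_eq_integral_Ioo, ← intervalIntegral.integral_of_le hh.le,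
    integral_rpow (Or.inl hs), zero_rpow (by linarith), sub_zero]

lemma setLIntegral_Ioo_rpow_eq_top {h s : ℝ} (hh : 0 < h) (hs : s ≤ -1) :
    ∫⁻ t in Ioo 0 h, ENNReal.ofReal (t ^ s) = ⊤ := by
  have hnonneg : 0 ≤ᵐ[volume.restrict (Ioo 0 h)] fun t : ℝ => t ^ s :=
    (ae_restrict_iff' measurableSet_Ioo).2 (.of_forall fun t ht => rpow_nonneg ht.1.le s)
  by_contra hfin
  have hint : IntegrableOn (fun t : ℝ => t ^ s) (Ioo 0 h) :=
    ⟨(measurable_id.pow_const s).aestronglyMeasurable,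
      (hasFiniteIntegral_iff_ofReal hnonneg).2 (lt_top_iff_ne_top.2 hfin)⟩
  exact ((intervalIntegral.integrableOn_Ioo_rpow_iff hh).1 hint).not_ge hs

lemma tsum_setLIntegral_Ioo_rpow_lt_top_iff {ι : Type*} [Nonempty ι] {h : ι → ℝ}
    (hh : ∀ i, 0 < h i) {s : ℝ} :
    ∑' i, ∫⁻ t in Ioo 0 (h i), ENNReal.ofReal (t ^ s) < ⊤ ↔
      -1 < s ∧ Summable fun i => h i ^ (s + 1) := by
  by_cases hs : -1 < s
  · have hterm : ∀ i, 0 ≤ h i ^ (s + 1) / (s + 1) := fun i =>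
      div_nonneg (rpow_nonneg (hh i).le _) (by linarith)
    simp only [setLIntegral_Ioo_rpow (hh _) hs, hs, true_and]
    refine ⟨fun hfin => ?_, fun hsum => (hsum.div_const _).tsum_ofReal_lt_top⟩
    have := ENNReal.summable_toReal hfin.ne
    simp only [ENNReal.toReal_ofReal (hterm _)] at this
    simpa [(by linarith : s + 1 ≠ 0)] using this.mul_right (s + 1)
  · rw [ENNReal.tsum_eq_top_of_eq_top
      ⟨Classical.arbitrary ι, setLIntegral_Ioo_rpow_eq_top (hh _) (not_lt.1 hs)⟩]
    simp [hs]

lemma div_one_sub_one_div_lt_one_div_iff {σ θ ρ : ℝ} (hθ : 1 < θ) (hρ : 0 < ρ) :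
    (1 - σ) / (1 - 1 / θ) < 1 / ρ ↔ 1 < θ * ((σ - 1) * ρ + 1) := by
  have hθ' : 0 < θ := by linarith
  rw [show 1 - 1 / θ = (θ - 1) / θ by field_simp, div_div_eq_mul_div,
    div_lt_div_iff₀ (by linarith) hρ]
  constructor <;> intro h <;> nlinarith

namespace WFn

variable {θ : ℝ}

lemma aSeq_succ (θ : ℝ) {n : ℕ} (hn : 1 ≤ n) :
    aSeq θ (n + 1) = aSeq θ n + 4 * (n : ℝ) ^ (-θ) := by
  obtain ⟨m, rfl⟩ := Nat.exists_eq_add_of_le' hn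
  rw [aSeq, aSeq, Nat.add_sub_cancel, Nat.add_sub_cancel, Finset.sum_Icc_succ_top (by omega)]
  ring

lemma aSeq_add_one (θ : ℝ) (n : ℕ) :
    aSeq θ (n + 1) = 4 * ∑ i ∈ Finset.range n, ((i : ℝ) + 1) ^ (-θ) := by
  induction n with
  | zero => simp [aSeq]
  | succ k ih =>
    rw [aSeq_succ θ (by omega), ih, Finset.sum_range_succ]
    push_cast
    ring

lemma monotone_aSeq (θ : ℝ) : Monotone (aSeq θ) := fun m n hmn =>
  mul_le_mul_of_nonneg_left (Finset.sum_le_sum_of_subset_of_nonneg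
    (Finset.Icc_subset_Icc_right (by omega)) fun _ _ _ => by positivity) (by norm_num)

lemma tendsto_aSeq (hθ : 1 < θ) :
    Filter.Tendsto (aSeq θ) Filter.atTop (𝓝 (4 * zetaR θ)) := by
  have hsum : Summable fun n : ℕ => ((n : ℝ) + 1) ^ (-θ) := by
    simpa using (summable_nat_add_iff 1).2 (Real.summable_nat_rpow.2 (neg_lt_neg hθ))
  rw [← Filter.tendsto_add_atTop_iff_nat 1]
  simp only [aSeq_add_one]
  exact hsum.hasSum.tendsto_sum_nat.const_mul 4

lemma aSeq_le_four_mul_zetaR (hθ : 1 < θ) (n : ℕ) : aSeq θ n ≤ 4 * zetaR θ :=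
  (monotone_aSeq θ).ge_of_tendsto (tendsto_aSeq hθ) n

lemma exists_mem_Ico_aSeq (hθ : 1 < θ) {ξ : ℝ} (h2 : aSeq θ 2 ≤ ξ) (hξ : ξ < 4 * zetaR θ) :
    ∃ n, 2 ≤ n ∧ ξ ∈ Ico (aSeq θ n) (aSeq θ (n + 1)) := by
  obtain ⟨m, hmξ, hm⟩ :=
    ((tendsto_aSeq hθ).eventually (eventually_gt_nhds hξ)).and
      (Filter.eventually_ge_atTop 2) |>.exists
  induction m, hm using Nat.le_induction with
  | base => exact absurd hmξ h2.not_gt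
  | succ m hm ih =>
    by_cases hmξ' : aSeq θ m ≤ ξ
    · exact ⟨m, hm, hmξ', hmξ⟩
    · exact ih (not_le.1 hmξ')

lemma wFn_eq_wPiece (σ : ℝ) {n : ℕ} (hn : 2 ≤ n) {ξ : ℝ}
    (hξ : ξ ∈ Ico (aSeq θ n) (aSeq θ (n + 1))) : wFn σ θ ξ = wPiece σ θ n ξ := by
  have hex : ∃ k, 2 ≤ k ∧ aSeq θ k ≤ ξ ∧ ξ < aSeq θ (k + 1) := ⟨n, hn, hξ⟩
  obtain ⟨-, hk⟩ := hex.choose_spec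
  have hdisj := (monotone_aSeq θ).pairwise_disjoint_on_Ico_succ
  by_cases hkn : hex.choose = n
  · rw [wFn, dif_pos hex, hkn]
  · exact absurd (Set.disjoint_left.1 (hdisj hkn) hk) (by simpa using hξ)

lemma wFn_eq_zero_of_lt (σ : ℝ) {ξ : ℝ} (hξ : ξ < aSeq θ 2) : wFn σ θ ξ = 0 := by
  rw [wFn, dif_neg]
  rintro ⟨n, hn, h1, -⟩
  exact (h1.trans_lt hξ).not_ge (monotone_aSeq θ hn)

lemma wFn_eq_zero_of_le (σ : ℝ) (hθ : 1 < θ) {ξ : ℝ} (hξ : 4 * zetaR θ ≤ ξ) : wFn σ θ ξ = 0 := by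
  rw [wFn, dif_neg]
  rintro ⟨n, -, -, h2⟩
  exact (h2.trans_le (aSeq_le_four_mul_zetaR hθ _)).not_ge hξ

lemma deriv_wFn_eq_zero (σ : ℝ) (hθ : 1 < θ) {ξ : ℝ} (ha : ξ ∉ range (aSeq θ))
    (hζ : ξ ≠ 4 * zetaR θ) (hpieces : ∀ n, 2 ≤ n → ξ ∉ Ioo (aSeq θ n) (aSeq θ (n + 1))) :
    deriv (wFn σ θ) ξ = 0 := by
  rcases lt_or_ge ξ (aSeq θ 2) with h2 | h2
  · have : wFn σ θ =ᶠ[𝓝 ξ] fun _ => 0 :=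
      (eventually_lt_nhds h2).mono fun y hy => wFn_eq_zero_of_lt σ hy
    rw [this.deriv_eq, deriv_const]
  rcases hζ.lt_or_gt with hlt | hgt
  · obtain ⟨n, hn, hξ⟩ := exists_mem_Ico_aSeq hθ h2 hlt
    exact absurd ⟨(hξ.1.lt_of_ne fun h => ha ⟨n, h⟩), hξ.2⟩ (hpieces n hn)
  · have : wFn σ θ =ᶠ[𝓝 ξ] fun _ => 0 :=
      (eventually_gt_nhds hgt).mono fun y hy => wFn_eq_zero_of_le σ hθ hy.le
    rw [this.deriv_eq, deriv_const]

section Bump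

variable (σ : ℝ) {n : ℕ} {x : ℝ}

lemma wFn_eventuallyEq_wPiece (hn : 2 ≤ n)
    (hx : x ∈ Ioo (aSeq θ n) (aSeq θ n + 4 * (n : ℝ) ^ (-θ))) :
    wFn σ θ =ᶠ[𝓝 x] wPiece σ θ n := by
  filter_upwards [Ioo_mem_nhds hx.1 hx.2] with y hy
  exact wFn_eq_wPiece σ hn ⟨hy.1.le, by rw [aSeq_succ θ (by omega)]; exact hy.2⟩

lemma deriv_wFn_of_mem_rise (hn : 2 ≤ n)
    (hx : x ∈ Ioo (aSeq θ n) (aSeq θ n + (n : ℝ) ^ (-θ))) :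
    deriv (wFn σ θ) x = σ * (x - aSeq θ n) ^ (σ - 1) := by
  have hh := rpow_pos_of_pos (Nat.cast_pos.2 (by omega : 0 < n)) (-θ)
  have hloc : wFn σ θ =ᶠ[𝓝 x] fun y => (y - aSeq θ n) ^ σ := by
    filter_upwards [wFn_eventuallyEq_wPiece σ hn ⟨hx.1, by linarith [hx.2]⟩,
      Ioo_mem_nhds hx.1 hx.2] with y hy hy'
    rw [hy, wPiece, if_pos hy'.2]
  rw [hloc.deriv_eq, (((hasDerivAt_id' x).sub_const _).rpow_const
    (Or.inl (sub_pos.2 hx.1).ne')).deriv]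
  simp

lemma deriv_wFn_of_mem_plateau (hn : 2 ≤ n)
    (hx : x ∈ Ioo (aSeq θ n + (n : ℝ) ^ (-θ)) (aSeq θ n + 2 * (n : ℝ) ^ (-θ))) :
    deriv (wFn σ θ) x = 0 := by
  have hh := rpow_pos_of_pos (Nat.cast_pos.2 (by omega : 0 < n)) (-θ)
  have hloc : wFn σ θ =ᶠ[𝓝 x] fun _ => (n : ℝ) ^ (-(θ * σ)) := by
    filter_upwards [wFn_eventuallyEq_wPiece σ hn ⟨by linarith [hx.1], by linarith [hx.2]⟩,
      Ioo_mem_nhds hx.1 hx.2] with y hy hy'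
    rw [hy, wPiece, if_neg hy'.1.not_gt, if_pos hy'.2]
  rw [hloc.deriv_eq, deriv_const]

lemma deriv_wFn_of_mem_fall (hn : 2 ≤ n)
    (hx : x ∈ Ioo (aSeq θ n + 2 * (n : ℝ) ^ (-θ)) (aSeq θ n + 3 * (n : ℝ) ^ (-θ))) :
    deriv (wFn σ θ) x = -(σ * (aSeq θ n + 3 * (n : ℝ) ^ (-θ) - x) ^ (σ - 1)) := by
  have hh := rpow_pos_of_pos (Nat.cast_pos.2 (by omega : 0 < n)) (-θ)
  have hloc : wFn σ θ =ᶠ[𝓝 x] fun y => (aSeq θ n + 3 * (n : ℝ) ^ (-θ) - y) ^ σ := by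
    filter_upwards [wFn_eventuallyEq_wPiece σ hn ⟨by linarith [hx.1], by linarith [hx.2]⟩,
      Ioo_mem_nhds hx.1 hx.2] with y hy hy'
    rw [hy, wPiece, if_neg (by linarith [hy'.1]), if_neg hy'.1.not_gt, if_pos hy'.2]
  rw [hloc.deriv_eq, (((hasDerivAt_id' x).const_sub _).rpow_const
    (Or.inl (sub_pos.2 hx.2).ne')).deriv]
  simp

lemma deriv_wFn_of_mem_gap (hn : 2 ≤ n)
    (hx : x ∈ Ioo (aSeq θ n + 3 * (n : ℝ) ^ (-θ)) (aSeq θ n + 4 * (n : ℝ) ^ (-θ))) :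
    deriv (wFn σ θ) x = 0 := by
  have hh := rpow_pos_of_pos (Nat.cast_pos.2 (by omega : 0 < n)) (-θ)
  have hloc : wFn σ θ =ᶠ[𝓝 x] fun _ => 0 := by
    filter_upwards [wFn_eventuallyEq_wPiece σ hn ⟨by linarith [hx.1], hx.2⟩,
      Ioo_mem_nhds hx.1 hx.2] with y hy hy'
    rw [hy, wPiece, if_neg (by linarith [hy'.1]), if_neg (by linarith [hy'.1]),
      if_neg hy'.1.not_gt]
  rw [hloc.deriv_eq, deriv_const]

end Bump

lemma setLIntegral_Ioc_aSeq_enorm_deriv_wFn {σ ρ : ℝ} (hρ : 0 < ρ) {n : ℕ} (hn : 2 ≤ n) :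
    ∫⁻ x in Ioc (aSeq θ n) (aSeq θ (n + 1)), ‖deriv (wFn σ θ) x‖ₑ ^ ρ =
      2 * ∫⁻ t in Ioo 0 ((n : ℝ) ^ (-θ)), ‖σ * t ^ (σ - 1)‖ₑ ^ ρ := by
  have hh := rpow_pos_of_pos (Nat.cast_pos.2 (by omega : 0 < n)) (-θ)
  rw [aSeq_succ θ (by omega)]
  set a := aSeq θ n
  set h := (n : ℝ) ^ (-θ)
  have hflat : ∀ {l r : ℝ}, (∀ x ∈ Ioo l r, deriv (wFn σ θ) x = 0) →
      ∫⁻ x in Ioc l r, ‖deriv (wFn σ θ) x‖ₑ ^ ρ = 0 := fun hd => by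
    rw [← restrict_Ioo_eq_restrict_Ioc, setLIntegral_congr_fun measurableSet_Ioo fun x hx => by
      rw [hd x hx, enorm_zero, ENNReal.zero_rpow_of_pos hρ], lintegral_zero]
  have hrise : ∫⁻ x in Ioc a (a + h), ‖deriv (wFn σ θ) x‖ₑ ^ ρ =
      ∫⁻ t in Ioo 0 h, ‖σ * t ^ (σ - 1)‖ₑ ^ ρ := by
    rw [← restrict_Ioo_eq_restrict_Ioc, ← setLIntegral_Ioo_comp_sub_right _ a h]
    exact setLIntegral_congr_fun measurableSet_Ioo fun x hx => by
      rw [deriv_wFn_of_mem_rise σ hn hx]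
  have hfall : ∫⁻ x in Ioc (a + 2 * h) (a + 3 * h), ‖deriv (wFn σ θ) x‖ₑ ^ ρ =
      ∫⁻ t in Ioo 0 h, ‖σ * t ^ (σ - 1)‖ₑ ^ ρ := by
    rw [← restrict_Ioo_eq_restrict_Ioc, ← setLIntegral_Ioo_comp_const_sub _ (a + 3 * h) h,
      show a + 3 * h - h = a + 2 * h by ring]
    exact setLIntegral_congr_fun measurableSet_Ioo fun x hx => by
      rw [deriv_wFn_of_mem_fall σ hn hx, enorm_neg]
  rw [setLIntegral_Ioc_eq_add _ (by linarith : a ≤ a + h) (by linarith),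
    setLIntegral_Ioc_eq_add _ (by linarith : a + h ≤ a + 2 * h) (by linarith),
    setLIntegral_Ioc_eq_add _ (by linarith : a + 2 * h ≤ a + 3 * h) (by linarith),
    hrise, hfall, hflat fun x hx => deriv_wFn_of_mem_plateau σ hn hx,
    hflat fun x hx => deriv_wFn_of_mem_gap σ hn hx, zero_add, add_zero, two_mul]

lemma lintegral_enorm_deriv_wFn_rpow {σ ρ : ℝ} (hθ : 1 < θ) (hρ : 0 < ρ) :
    ∫⁻ x, ‖deriv (wFn σ θ) x‖ₑ ^ ρ =
      ∑' k : ℕ, 2 * ∫⁻ t in Ioo 0 (((k + 2 : ℕ) : ℝ) ^ (-θ)), ‖σ * t ^ (σ - 1)‖ₑ ^ ρ := by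
  set I : ℕ → Set ℝ := fun k => Ioc (aSeq θ (k + 2)) (aSeq θ (k + 2 + 1))
  have hdisj : Pairwise (Function.onFun Disjoint I) := by
    simpa using
      ((monotone_aSeq θ).comp fun _ _ h => Nat.add_le_add_right h 2).pairwise_disjoint_on_Ioc_succ
  have hsupp : (fun x => ‖deriv (wFn σ θ) x‖ₑ ^ ρ) =ᵐ[volume]
      (⋃ k, I k).indicator fun x => ‖deriv (wFn σ θ) x‖ₑ ^ ρ := by
    filter_upwards [((countable_range (aSeq θ)).insert (4 * zetaR θ)).ae_notMem volume]
      with x hx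
    by_cases hxI : x ∈ ⋃ k, I k
    · rw [indicator_of_mem hxI]
    have hpieces : ∀ n, 2 ≤ n → x ∉ Ioo (aSeq θ n) (aSeq θ (n + 1)) := fun n hn hxn => by
      obtain ⟨k, rfl⟩ := Nat.exists_eq_add_of_le' hn
      exact hxI (mem_iUnion.2 ⟨k, Ioo_subset_Ioc_self hxn⟩)
    rw [indicator_of_notMem hxI, deriv_wFn_eq_zero σ hθ (fun h => hx (Or.inr h))
      (fun h => hx (Or.inl h)) hpieces, enorm_zero, ENNReal.zero_rpow_of_pos hρ]
  rw [lintegral_congr_ae hsupp, lintegral_indicator (.iUnion fun _ => measurableSet_Ioc),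
    lintegral_iUnion (fun _ => measurableSet_Ioc) hdisj]
  exact tsum_congr fun k => setLIntegral_Ioc_aSeq_enorm_deriv_wFn hρ (by omega)

lemma lintegral_enorm_deriv_wFn_rpow_lt_top_iff {σ ρ : ℝ} (hσ : 0 < σ) (hθ : 1 < θ)
    (hρ : 0 < ρ) :
    ∫⁻ x, ‖deriv (wFn σ θ) x‖ₑ ^ ρ < ⊤ ↔ 1 < θ * ((σ - 1) * ρ + 1) := by
  have hbump : ∀ h : ℝ, ∫⁻ t in Ioo 0 h, ‖σ * t ^ (σ - 1)‖ₑ ^ ρ =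
      ENNReal.ofReal (σ ^ ρ) * ∫⁻ t in Ioo 0 h, ENNReal.ofReal (t ^ ((σ - 1) * ρ)) := fun h => by
    rw [← lintegral_const_mul' _ _ ENNReal.ofReal_ne_top]
    refine setLIntegral_congr_fun measurableSet_Ioo fun t ht => ?_
    have ht' : 0 ≤ t ^ (σ - 1) := rpow_nonneg ht.1.le _
    rw [Real.enorm_eq_ofReal (by positivity), ENNReal.ofReal_rpow_of_nonneg (by positivity) hρ.le,
      mul_rpow hσ.le ht', ← rpow_mul ht.1.le, ENNReal.ofReal_mul (by positivity)]
  have hσρ : ENNReal.ofReal (σ ^ ρ) ≠ 0 := by simpa using rpow_pos_of_pos hσ ρ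
  have hwidth : ∀ k : ℕ, (0 : ℝ) < ((k + 2 : ℕ) : ℝ) ^ (-θ) := fun k => by positivity
  have hpow : ∀ k : ℕ, (((k + 2 : ℕ) : ℝ) ^ (-θ)) ^ ((σ - 1) * ρ + 1) =
      ((k + 2 : ℕ) : ℝ) ^ (-(θ * ((σ - 1) * ρ + 1))) := fun k => by
    rw [← rpow_mul (by positivity), neg_mul]
  simp only [lintegral_enorm_deriv_wFn_rpow hθ hρ, hbump, ENNReal.tsum_mul_left,
    lt_top_iff_ne_top, ne_eq, ENNReal.mul_eq_top, hσρ, ENNReal.ofReal_ne_top, two_ne_zero,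
    ENNReal.ofNat_ne_top, not_false_eq_true, true_and, false_and, or_false]
  rw [← ne_eq, ← lt_top_iff_ne_top, tsum_setLIntegral_Ioo_rpow_lt_top_iff hwidth]
  simp only [hpow, Real.summable_nat_rpow, neg_lt_neg_iff,
    summable_nat_add_iff (f := fun n : ℕ => (n : ℝ) ^ (-(θ * ((σ - 1) * ρ + 1)))) 2]
  exact and_iff_right_of_imp fun h => by nlinarith

end WFn

theorem stmt5_general (σ θ ρ : ℝ) (hσ0 : 0 < σ) (hθ : 1 < θ) (hρ : 0 < ρ) :
    MeasureTheory.MemLp (deriv (wFn σ θ)) (ENNReal.ofReal ρ) volume ↔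
      (1 - σ) / (1 - 1 / θ) < 1 / ρ := by
  rw [MemLp, and_iff_right (stronglyMeasurable_deriv _).aestronglyMeasurable,
    eLpNorm_lt_top_iff_lintegral_rpow_enorm_lt_top (by simpa using hρ) ENNReal.ofReal_ne_top,
    ENNReal.toReal_ofReal hρ.le, WFn.lintegral_enorm_deriv_wFn_rpow_lt_top_iff hσ0 hθ hρ,
    div_one_sub_one_div_lt_one_div_iff hθ hρ]

/-- For 0 < σ < 1, 1 < θ, 0 < ρ < ∞: w'_{σ,θ} ∈ L_ρ(ℝ) iff (1−σ)/(1−1/θ) < 1/ρ. -/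
theorem stmt5 (σ θ ρ : ℝ) (hσ0 : 0 < σ) (hσ1 : σ < 1) (hθ : 1 < θ) (hρ : 0 < ρ) :
    MeasureTheory.MemLp (deriv (wFn σ θ)) (ENNReal.ofReal ρ) volume ↔
      (1 - σ) / (1 - 1 / θ) < 1 / ρ :=
  stmt5_general σ θ ρ hσ0 hθ hρ
end

section
/- If σ ≥ 1 then w'_{σ,θ} ∈ L_ρ(ℝ) for all 0 < ρ ≤ ∞; in particular ‖w'_{σ,θ}‖_{L_∞} < ∞ if and only if σ ≥ 1. -/
open MeasureTheory Real Set

/-! The bump train is `G ^ σ`, where `G` (the train of trapezoids of slope `±1`, with values in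
`[0, 1]`) is `1`-Lipschitz, being a supremum of `1`-Lipschitz functions. For `σ ≥ 1`, `t ↦ t ^ σ` is
`σ`-Lipschitz on `[0, 1]`, so `|w'| ≤ σ` everywhere, and `w'` vanishes off the compact interval
`[4, 4 ζ(θ)]`, so `w'` lies in every `L^ρ`. For `σ < 1`, `w'(ξ) = σ (ξ - 4) ^ (σ - 1)` blows up as
`ξ → 4⁺`, so `w'` is not essentially bounded. -/

open Filter Topology

section General

theorem LipschitzWith.ciSup {α ι : Type*} [PseudoMetricSpace α] [Nonempty ι] {K : NNReal}
    {f : ι → α → ℝ} (hf : ∀ i, LipschitzWith K (f i))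
    (hbdd : ∀ x, BddAbove (range fun i => f i x)) :
    LipschitzWith K fun x => ⨆ i, f i x :=
  LipschitzWith.of_le_add_mul K fun x y =>
    ciSup_le fun i => ((hf i).le_add_mul x y).trans (by gcongr; exact le_ciSup (hbdd y) i)

theorem lipschitzOnWith_rpow_Icc_zero_one {σ : ℝ} (hσ : 1 ≤ σ) :
    LipschitzOnWith σ.toNNReal (fun t : ℝ => t ^ σ) (Icc 0 1) := by
  refine (convex_Icc (0 : ℝ) 1).lipschitzOnWith_of_nnnorm_hasDerivWithin_le
    (f' := fun t => σ * t ^ (σ - 1))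
    (fun t _ => (hasDerivAt_rpow_const (Or.inr hσ)).hasDerivWithinAt) fun t ht => ?_
  have hpow : t ^ (σ - 1) ≤ 1 := rpow_le_one ht.1 ht.2 (by linarith)
  rw [← NNReal.coe_le_coe, coe_nnnorm, coe_toNNReal _ (by linarith), norm_mul,
    norm_of_nonneg (by linarith), norm_of_nonneg (rpow_nonneg ht.1 _)]
  nlinarith

theorem deriv_eq_zero_of_notMem {𝕜 F : Type*} [NontriviallyNormedField 𝕜] [NormedAddCommGroup F]
    [NormedSpace 𝕜 F] {f : 𝕜 → F} {s : Set 𝕜} (hs : IsClosed s) (hf : ∀ x ∉ s, f x = 0) {x : 𝕜}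
    (hx : x ∉ s) : deriv f x = 0 := by
  have hloc : f =ᶠ[𝓝 x] fun _ => 0 := eventually_of_mem (hs.isOpen_compl.mem_nhds hx) hf
  rw [hloc.deriv_eq, deriv_const]

theorem memLp_deriv_of_lipschitzWith {F : Type*} [NormedAddCommGroup F] [NormedSpace ℝ F]
    [CompleteSpace F] {f : ℝ → F} {K : NNReal} (hf : LipschitzWith K f) {a b : ℝ}
    (hsupp : ∀ x ∉ Icc a b, f x = 0) (p : ENNReal) : MemLp (deriv f) p volume := by
  refine (memLp_indicator_const p (measurableSet_Icc (a := a) (b := b)) (K : ℝ)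
    (Or.inr measure_Icc_lt_top.ne)).of_le
    (stronglyMeasurable_deriv f).aestronglyMeasurable (ae_of_all _ fun x => ?_)
  by_cases hx : x ∈ Icc a b
  · rw [indicator_of_mem hx, norm_of_nonneg K.coe_nonneg]
    exact norm_deriv_le_of_lipschitz hf
  · rw [deriv_eq_zero_of_notMem isClosed_Icc hsupp hx, norm_zero]
    exact norm_nonneg _

theorem not_memLp_top_of_tendsto_norm_nhdsGT {E : Type*} [NormedAddCommGroup E] {f : ℝ → E} {a : ℝ}
    (hf : Tendsto (fun x => ‖f x‖) (𝓝[>] a) atTop) : ¬ MemLp f ⊤ volume := by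
  intro hmem
  have hbdd : eLpNormEssSup f volume < ⊤ := by simpa using hmem.2
  obtain ⟨C, hC⟩ := eLpNormEssSup_lt_top_iff_isBoundedUnder.1 hbdd
  obtain ⟨b, hab, hsub⟩ := mem_nhdsGT_iff_exists_Ioo_subset.1 (hf.eventually_gt_atTop (C : ℝ))
  have hnull : volume (Ioo a b) = 0 :=
    measure_mono_null (t := {x | ¬ ‖f x‖₊ ≤ C})
      (fun x hx => not_le.2 (by exact_mod_cast hsub hx)) (ae_iff.1 hC)
  simp only [Real.volume_Ioo, ENNReal.ofReal_eq_zero, tsub_nonpos] at hnull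
  exact not_le.2 hab hnull

theorem tendsto_mul_rpow_sub_nhdsGT {σ : ℝ} (hσ0 : 0 < σ) (hσ1 : σ < 1) (a : ℝ) :
    Tendsto (fun x => σ * (x - a) ^ (σ - 1)) (𝓝[>] a) atTop := by
  have hshift : Tendsto (fun x : ℝ => x - a) (𝓝[>] a) (𝓝[>] 0) := by
    simpa using
      ((continuous_sub_right a).continuousWithinAt (s := Ioi a) (x := a)).tendsto_nhdsWithin
        (t := Ioi 0) fun x (hx : a < x) => sub_pos.2 hx
  exact ((tendsto_rpow_neg_nhdsGT_zero (by linarith)).comp hshift).const_mul_atTop hσ0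

end General

section Trapezoid

/-- For `a = aSeq θ n ≤ ξ` and `p = n ^ (-θ)` this is `wPiece 1 θ n ξ`, written with `max`/`min` so
that it is visibly `1`-Lipschitz. -/
def trapezoid (a p ξ : ℝ) : ℝ := max 0 (min (min (ξ - a) p) (a + 3 * p - ξ))

variable {a p ξ : ℝ}

theorem trapezoid_nonneg : 0 ≤ trapezoid a p ξ := le_max_left _ _

theorem trapezoid_le (hp : 0 ≤ p) : trapezoid a p ξ ≤ p :=
  max_le hp ((min_le_left _ _).trans (min_le_right _ _))

theorem trapezoid_eq_zero (h : ξ ≤ a ∨ a + 3 * p ≤ ξ) : trapezoid a p ξ = 0 := by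
  refine max_eq_left ?_
  rcases h with h | h
  · exact (min_le_left _ _).trans ((min_le_left _ _).trans (by linarith))
  · exact (min_le_right _ _).trans (by linarith)

theorem lipschitzWith_trapezoid (a p : ℝ) : LipschitzWith 1 (trapezoid a p) := by
  have hrise : LipschitzWith 1 fun ξ : ℝ => ξ - a := by
    simpa using LipschitzWith.id.sub (LipschitzWith.const a)
  have hfall : LipschitzWith 1 fun ξ : ℝ => a + 3 * p - ξ := by
    simpa using (LipschitzWith.const (a + 3 * p)).sub LipschitzWith.id
  have hconst (c : ℝ) : LipschitzWith 1 fun _ : ℝ => c := (LipschitzWith.const c).weaken zero_le_one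
  show LipschitzWith 1 fun ξ => max 0 (min (min (ξ - a) p) (a + 3 * p - ξ))
  simpa using (hconst 0).max ((hrise.min (hconst p)).min hfall)

end Trapezoid

section Nodes

variable {θ : ℝ}

theorem aSeq_mono (θ : ℝ) : Monotone (aSeq θ) := fun m n hmn => by
  unfold aSeq
  gcongr

theorem aSeq_succ (θ : ℝ) {n : ℕ} (hn : 1 ≤ n) :
    aSeq θ (n + 1) = aSeq θ n + 4 * (n : ℝ) ^ (-θ) := by
  obtain ⟨m, rfl⟩ := Nat.exists_eq_add_of_le' hn
  simp only [aSeq, Nat.add_sub_cancel, Finset.sum_Icc_succ_top (by omega : 1 ≤ m + 1)]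
  push_cast
  ring

theorem aSeq_two (θ : ℝ) : aSeq θ 2 = 4 := by simp [aSeq]

theorem aSeq_le_four_mul_zetaR (hθ : 1 < θ) (n : ℕ) : aSeq θ n ≤ 4 * zetaR θ := by
  have hsumm : Summable fun i : ℕ => ((i : ℝ) + 1) ^ (-θ) := by
    simpa using (summable_nat_add_iff 1).2 (summable_nat_rpow.2 (by linarith : -θ < -1))
  have hreindex : ∑ j ∈ Finset.Icc 1 (n - 1), (j : ℝ) ^ (-θ)
      = ∑ i ∈ Finset.range (n - 1), ((i : ℝ) + 1) ^ (-θ) := by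
    have hshift := Finset.sum_Ico_add' (fun j : ℕ => (j : ℝ) ^ (-θ)) 0 (n - 1) 1
    push_cast at hshift
    rw [Finset.range_eq_Ico, hshift, Finset.Ico_add_one_right_eq_Icc]
  rw [aSeq, zetaR, hreindex]
  gcongr
  exact hsumm.sum_le_tsum _ fun i _ => by positivity

theorem natCast_rpow_neg_pos {n : ℕ} (hn : 1 ≤ n) : 0 < (n : ℝ) ^ (-θ) :=
  rpow_pos_of_pos (by exact_mod_cast hn) _

theorem eq_of_mem_Ico_aSeq {m n : ℕ} {ξ : ℝ} (hm : ξ ∈ Ico (aSeq θ m) (aSeq θ (m + 1)))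
    (hn : ξ ∈ Ico (aSeq θ n) (aSeq θ (n + 1))) : m = n := by
  by_contra hne
  rcases lt_or_gt_of_ne hne with h | h
  · linarith [aSeq_mono θ (by omega : m + 1 ≤ n), hm.2, hn.1]
  · linarith [aSeq_mono θ (by omega : n + 1 ≤ m), hm.1, hn.2]

theorem trapezoid_aSeq_eq_zero {m : ℕ} (hm : 1 ≤ m) {ξ : ℝ}
    (hξ : ξ ∉ Ico (aSeq θ m) (aSeq θ (m + 1))) :
    trapezoid (aSeq θ m) ((m : ℝ) ^ (-θ)) ξ = 0 := by
  refine trapezoid_eq_zero ?_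
  rw [mem_Ico, not_and_or, not_le, not_lt, aSeq_succ θ hm] at hξ
  have := natCast_rpow_neg_pos (θ := θ) hm
  rcases hξ with h | h
  · exact Or.inl h.le
  · exact Or.inr (by linarith)

end Nodes

section BumpTrain

variable {σ θ : ℝ}

/-- The bump train for `σ = 1`, as the supremum of its disjointly supported bumps (the `n`-th term
is block `n + 2`, blocks starting at `2`); `wFn σ θ = bumpProfile θ ^ σ`. -/
noncomputable def bumpProfile (θ ξ : ℝ) : ℝ :=
  ⨆ n : ℕ, trapezoid (aSeq θ (n + 2)) (((n + 2 : ℕ) : ℝ) ^ (-θ)) ξ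

theorem trapezoid_aSeq_le_one (hθ : 0 ≤ θ) (n : ℕ) (ξ : ℝ) :
    trapezoid (aSeq θ (n + 2)) (((n + 2 : ℕ) : ℝ) ^ (-θ)) ξ ≤ 1 :=
  (trapezoid_le (by positivity)).trans
    (rpow_le_one_of_one_le_of_nonpos (by norm_cast; omega) (by linarith))

theorem bddAbove_trapezoid_aSeq (hθ : 0 ≤ θ) (ξ : ℝ) :
    BddAbove (range fun n : ℕ => trapezoid (aSeq θ (n + 2)) (((n + 2 : ℕ) : ℝ) ^ (-θ)) ξ) :=
  ⟨1, by rintro _ ⟨n, rfl⟩; exact trapezoid_aSeq_le_one hθ n ξ⟩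

theorem lipschitzWith_bumpProfile (hθ : 0 ≤ θ) : LipschitzWith 1 (bumpProfile θ) :=
  LipschitzWith.ciSup (fun _ => lipschitzWith_trapezoid _ _) (bddAbove_trapezoid_aSeq hθ)

theorem bumpProfile_mem_Icc (hθ : 0 ≤ θ) (ξ : ℝ) : bumpProfile θ ξ ∈ Icc 0 1 :=
  ⟨trapezoid_nonneg.trans (le_ciSup (bddAbove_trapezoid_aSeq hθ ξ) 0),
    ciSup_le fun n => trapezoid_aSeq_le_one hθ n ξ⟩

theorem bumpProfile_eq_trapezoid (hθ : 0 ≤ θ) {n : ℕ} (hn : 2 ≤ n) {ξ : ℝ}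
    (hξ : ξ ∈ Ico (aSeq θ n) (aSeq θ (n + 1))) :
    bumpProfile θ ξ = trapezoid (aSeq θ n) ((n : ℝ) ^ (-θ)) ξ := by
  obtain ⟨k, rfl⟩ := Nat.exists_eq_add_of_le' hn
  refine le_antisymm (ciSup_le fun m => ?_) (le_ciSup (bddAbove_trapezoid_aSeq hθ ξ) k)
  rcases eq_or_ne m k with rfl | hne
  · exact le_rfl
  · have hξm : ξ ∉ Ico (aSeq θ (m + 2)) (aSeq θ (m + 2 + 1)) := fun hm =>
      hne (by have := eq_of_mem_Ico_aSeq hm hξ; omega)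
    rw [trapezoid_aSeq_eq_zero (by omega) hξm]
    exact trapezoid_nonneg

theorem bumpProfile_eq_zero {ξ : ℝ} (hξ : ∀ n, 2 ≤ n → ξ ∉ Ico (aSeq θ n) (aSeq θ (n + 1))) :
    bumpProfile θ ξ = 0 := by
  have hzero (m : ℕ) : trapezoid (aSeq θ (m + 2)) (((m + 2 : ℕ) : ℝ) ^ (-θ)) ξ = 0 :=
    trapezoid_aSeq_eq_zero (by omega) (hξ _ (by omega))
  simp only [bumpProfile, hzero, ciSup_const]

theorem wFn_eq_wPiece {n : ℕ} (hn : 2 ≤ n) {ξ : ℝ} (hξ : ξ ∈ Ico (aSeq θ n) (aSeq θ (n + 1))) :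
    wFn σ θ ξ = wPiece σ θ n ξ := by
  have hex : ∃ m : ℕ, 2 ≤ m ∧ aSeq θ m ≤ ξ ∧ ξ < aSeq θ (m + 1) := ⟨n, hn, hξ⟩
  obtain ⟨-, hchoose⟩ := hex.choose_spec
  rw [wFn, dif_pos hex, eq_of_mem_Ico_aSeq hchoose hξ]

theorem wPiece_eq_trapezoid_rpow (hσ : σ ≠ 0) {n : ℕ} {ξ : ℝ} (hξ : aSeq θ n ≤ ξ) :
    wPiece σ θ n ξ = trapezoid (aSeq θ n) ((n : ℝ) ^ (-θ)) ξ ^ σ := by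
  unfold wPiece trapezoid
  set a := aSeq θ n
  set p := (n : ℝ) ^ (-θ) with hp
  split_ifs with hrise hplateau hfall
  · rw [min_eq_left (show ξ - a ≤ p by linarith),
      min_eq_left (show ξ - a ≤ a + 3 * p - ξ by linarith), max_eq_right (show 0 ≤ ξ - a by linarith)]
  · rw [min_eq_right (show p ≤ ξ - a by linarith), min_eq_left (show p ≤ a + 3 * p - ξ by linarith),
      max_eq_right (show 0 ≤ p by linarith), hp, ← rpow_mul (Nat.cast_nonneg n), neg_mul]
  · rw [min_eq_right (show p ≤ ξ - a by linarith),
      min_eq_right (show a + 3 * p - ξ ≤ p by linarith),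
      max_eq_right (show 0 ≤ a + 3 * p - ξ by linarith)]
  · rw [max_eq_left ((min_le_right _ _).trans (show a + 3 * p - ξ ≤ 0 by linarith)), zero_rpow hσ]

theorem wFn_eq_bumpProfile_rpow (hσ : σ ≠ 0) (hθ : 0 ≤ θ) (ξ : ℝ) :
    wFn σ θ ξ = bumpProfile θ ξ ^ σ := by
  by_cases hex : ∃ n : ℕ, 2 ≤ n ∧ aSeq θ n ≤ ξ ∧ ξ < aSeq θ (n + 1)
  · obtain ⟨n, hn, hξ⟩ := hex
    rw [wFn_eq_wPiece hn hξ, wPiece_eq_trapezoid_rpow hσ hξ.1, bumpProfile_eq_trapezoid hθ hn hξ]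
  · rw [wFn, dif_neg hex, bumpProfile_eq_zero fun n hn hξ => hex ⟨n, hn, hξ⟩, zero_rpow hσ]

theorem lipschitzWith_wFn (hσ : 1 ≤ σ) (hθ : 0 ≤ θ) : LipschitzWith σ.toNNReal (wFn σ θ) := by
  have hcomp := (lipschitzOnWith_rpow_Icc_zero_one hσ).comp
    (lipschitzWith_bumpProfile hθ).lipschitzOnWith (s := univ) fun ξ _ => bumpProfile_mem_Icc hθ ξ
  rw [lipschitzOnWith_univ, mul_one] at hcomp
  convert hcomp using 1
  funext ξ
  exact wFn_eq_bumpProfile_rpow (by linarith) hθ ξ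

theorem wFn_eq_zero_of_notMem (hθ : 1 < θ) {ξ : ℝ} (hξ : ξ ∉ Icc 4 (4 * zetaR θ)) :
    wFn σ θ ξ = 0 := by
  refine dif_neg fun ⟨n, hn, hξn⟩ => hξ ⟨?_, ?_⟩
  · linarith [aSeq_two θ ▸ aSeq_mono θ hn, hξn.1]
  · linarith [aSeq_le_four_mul_zetaR hθ (n + 1), hξn.2]

theorem memLp_deriv_wFn (hσ : 1 ≤ σ) (hθ : 1 < θ) (ρ : ENNReal) :
    MemLp (deriv (wFn σ θ)) ρ volume :=
  memLp_deriv_of_lipschitzWith (lipschitzWith_wFn hσ (by linarith))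
    (fun _ => wFn_eq_zero_of_notMem hθ) ρ

theorem wFn_eqOn_Ioo : EqOn (wFn σ θ) (fun ξ => (ξ - 4) ^ σ) (Ioo 4 (4 + 2 ^ (-θ))) := by
  intro ξ hξ
  have hp : (0 : ℝ) < 2 ^ (-θ) := rpow_pos_of_pos two_pos _
  have hblock : ξ ∈ Ico (aSeq θ 2) (aSeq θ (2 + 1)) := by
    rw [aSeq_succ θ (n := 2) (by norm_num), aSeq_two]
    push_cast
    exact ⟨hξ.1.le, by linarith [hξ.2]⟩
  rw [wFn_eq_wPiece le_rfl hblock, wPiece, aSeq_two, if_pos (by push_cast; exact hξ.2)]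

theorem deriv_wFn_of_mem_Ioo {ξ : ℝ} (hξ : ξ ∈ Ioo 4 (4 + 2 ^ (-θ))) :
    deriv (wFn σ θ) ξ = σ * (ξ - 4) ^ (σ - 1) := by
  have hramp : HasDerivAt (fun x : ℝ => (x - 4) ^ σ) (σ * (ξ - 4) ^ (σ - 1)) ξ := by
    simpa using ((hasDerivAt_id ξ).sub_const 4).rpow_const (Or.inl (sub_pos.2 hξ.1).ne')
  exact (hramp.congr_of_eventuallyEq (wFn_eqOn_Ioo.eventuallyEq_of_mem
    (isOpen_Ioo.mem_nhds hξ))).deriv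

theorem not_memLp_top_deriv_wFn (hσ0 : 0 < σ) (hσ1 : σ < 1) :
    ¬ MemLp (deriv (wFn σ θ)) ⊤ volume := by
  have hp : (0 : ℝ) < 2 ^ (-θ) := rpow_pos_of_pos two_pos _
  refine not_memLp_top_of_tendsto_norm_nhdsGT
    ((tendsto_mul_rpow_sub_nhdsGT hσ0 hσ1 4).congr' ?_)
  filter_upwards [Ioo_mem_nhdsGT (by linarith : (4 : ℝ) < 4 + 2 ^ (-θ))] with ξ hξ
  rw [deriv_wFn_of_mem_Ioo hξ,
    norm_of_nonneg (mul_nonneg hσ0.le (rpow_nonneg (by linarith [hξ.1]) _))]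

end BumpTrain

/-- If σ ≥ 1 then w'_{σ,θ} ∈ L_ρ(ℝ) for all 0 < ρ ≤ ∞; moreover
‖w'_{σ,θ}‖_{L_∞} < ∞ if and only if σ ≥ 1. -/
theorem stmt6 (σ θ : ℝ) (hσ : 0 < σ) (hθ : 1 < θ) :
    (1 ≤ σ → ∀ ρ : ENNReal, 0 < ρ →
      MeasureTheory.MemLp (deriv (wFn σ θ)) ρ volume) ∧
    (MeasureTheory.MemLp (deriv (wFn σ θ)) ⊤ volume ↔ 1 ≤ σ) := by
  refine ⟨fun hσ1 ρ _ => memLp_deriv_wFn hσ1 hθ ρ, fun hmem => ?_,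
    fun hσ1 => memLp_deriv_wFn hσ1 hθ ⊤⟩
  by_contra! hσ1
  exact not_memLp_top_deriv_wFn hσ hσ1 hmem
end
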